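/- Let μ : [0,∞) → [0,1] be continuous and θ₁, θ₂ ∈ [0, 2π). Suppose Ψ = (ψ_{ς₀ς₁ς₂}) is C¹ on [0,∞) × closure(S₁), satisfies the equal-time evolution equations on (0,∞) × S₁ and the leaky boundary conditions on C₁ and C₂, and for every bounded time interval has compact spatial support. Then the total probability is non-increasing: for all 0 ≤ t₁ ≤ t₂, ∫_{S₁} |Ψ(t₂, ·)|² ≤ ∫_{S₁} |Ψ(t₁, ·)|², where |Ψ|² := Σ_{ς₀,ς₁,ς₂} |ψ_{ς₀ς₁ς₂}|². -/

import Mathlib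

open Complex MeasureTheory

noncomputable section

/-- Partial derivative (in coordinate `i`) of a complex-valued function on `ℝⁿ`. -/
def pdC {n : ℕ} (i : Fin n) (f : (Fin n → ℝ) → ℂ) (x : Fin n → ℝ) : ℂ :=
  fderiv ℝ f x (Pi.single i 1)

/-- The spatial domain `S₁ = {(s_ph, s_e1, s_e2) : s_e1 < s_ph < s_e2}`;
coordinates are `p 0 = s_ph`, `p 1 = s_e1`, `p 2 = s_e2`. -/
def S1 : Set (Fin 3 → ℝ) := {p | p 1 < p 0 ∧ p 0 < p 2}

/-- Spacetime point `(t, s_ph, s_e1, s_e2)` from a time `t` and spatial point `p`. -/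
def pt (t : ℝ) (p : Fin 3 → ℝ) : Fin 4 → ℝ := ![t, p 0, p 1, p 2]

/-- The spatial part of a spacetime point. -/
def sp (x : Fin 4 → ℝ) : Fin 3 → ℝ := ![x 1, x 2, x 3]

/-- The probability density `Σ_{ς₀,ς₁,ς₂} |ψ_{ς₀ς₁ς₂}|²` at time `t`, spatial point `p`. -/
def totD (ψ : ℝ → ℝ → ℝ → (Fin 4 → ℝ) → ℂ) (t : ℝ) (p : Fin 3 → ℝ) : ℝ :=
  ∑ ς₀ ∈ ({-1, 1} : Finset ℝ), ∑ ς₁ ∈ ({-1, 1} : Finset ℝ), ∑ ς₂ ∈ ({-1, 1} : Finset ℝ),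
    ‖ψ ς₀ ς₁ ς₂ (pt t p)‖ ^ 2

/-!
In the coordinates `(t, s_ph, s_ph - s_e1, s_e2 - s_ph)` the region `[t₁, t₂] × S₁` becomes a
product of intervals, and the evolution equations say that the current
`Σ |ψ_{ς₀ς₁ς₂}|² (1, -ς₀, -ς₁, -ς₂)` is divergence free: the transport terms produce the
divergence, while the mass terms `iω ψ` couple `ς₁ ↔ -ς₁` and `ς₂ ↔ -ς₂` skew-adjointly and cancel.
The divergence theorem on a box containing the support then identifies `P(t₂) - P(t₁)` with the
flux through the two faces lying on `C₁` and `C₂`. On `C₁` this flux is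
`2 Σ_{ς₂} (|ψ_{-+ς₂}|² - |ψ_{+-ς₂}|²) ≤ 0`, since the boundary condition gives
`|ψ_{-+ς₂}| = μ |ψ_{+-ς₂}|` with `μ ≤ 1`; likewise on `C₂`.
-/

namespace LeakyProbability

open Set Filter Topology
open scoped InnerProductSpace

section Coordinates

def shearMatrix : Matrix (Fin 3) (Fin 3) ℝ := !![1, 0, 0; 1, -1, 0; 1, 0, 1]

lemma det_shearMatrix : shearMatrix.det = -1 := by
  simp [shearMatrix, Matrix.det_fin_three]

def shear : (Fin 3 → ℝ) ≃L[ℝ] (Fin 3 → ℝ) :=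
  (Matrix.toLinearEquiv' shearMatrix
    (shearMatrix.invertibleOfIsUnitDet (by simp [det_shearMatrix]))).toContinuousLinearEquiv

lemma coe_shear : (shear : (Fin 3 → ℝ) → (Fin 3 → ℝ)) = Matrix.toLin' shearMatrix := rfl

lemma shear_apply (y : Fin 3 → ℝ) : shear y = ![y 0, y 0 - y 1, y 0 + y 2] := by
  ext i
  fin_cases i <;> simp [coe_shear, shearMatrix, Matrix.mulVec, dotProduct, Fin.sum_univ_three]
  ring

lemma measurePreserving_shear : MeasurePreserving shear := by
  refine ⟨shear.continuous.measurable, ?_⟩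
  rw [coe_shear, Real.map_matrix_volume_pi_eq_smul_volume_pi (by simp [det_shearMatrix])]
  simp [det_shearMatrix]

lemma shear_mem_S1_iff {y : Fin 3 → ℝ} : shear y ∈ S1 ↔ 0 < y 1 ∧ 0 < y 2 := by
  simp [S1, shear_apply]

lemma shear_mem_closure_S1 {y : Fin 3 → ℝ} (h1 : 0 ≤ y 1) (h2 : 0 ≤ y 2) :
    shear y ∈ closure S1 := by
  have hlim : Tendsto (fun ε : ℝ => y + ε • ![0, 1, 1]) (𝓝[>] 0) (𝓝 y) := by
    have : Continuous (fun ε : ℝ => y + ε • ![0, 1, 1]) := by fun_prop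
    simpa using (this.tendsto 0).mono_left nhdsWithin_le_nhds
  refine mem_closure_of_tendsto ((shear.continuous.tendsto y).comp hlim)
    (eventually_nhdsWithin_of_forall fun ε (hε : 0 < ε) => ?_)
  rw [Function.comp_apply, shear_mem_S1_iff]
  exact ⟨by simpa using add_pos_of_nonneg_of_pos h1 hε,
    by simpa using add_pos_of_nonneg_of_pos h2 hε⟩

lemma isOpen_S1 : IsOpen S1 :=
  (isOpen_lt (continuous_apply 1) (continuous_apply 0)).inter
    (isOpen_lt (continuous_apply 0) (continuous_apply 2))

def spacetimeShear : (Fin 4 → ℝ) →L[ℝ] (Fin 4 → ℝ) :=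
  LinearMap.toContinuousLinearMap
    { toFun := fun x => pt (x 0) (shear (Fin.tail x))
      map_add' := fun x y => by
        rw [show Fin.tail (x + y) = Fin.tail x + Fin.tail y from rfl, map_add]
        ext i; fin_cases i <;> simp [pt]
      map_smul' := fun c x => by
        rw [show Fin.tail (c • x) = c • Fin.tail x from rfl, map_smul]
        ext i; fin_cases i <;> simp [pt] }

lemma spacetimeShear_apply (x : Fin 4 → ℝ) :
    spacetimeShear x = pt (x 0) (shear (Fin.tail x)) := rfl

lemma sp_spacetimeShear (x : Fin 4 → ℝ) : sp (spacetimeShear x) = shear (Fin.tail x) := by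
  ext i; fin_cases i <;> rfl

lemma isOpen_setOf_pos_sp_mem_S1 : IsOpen {x : Fin 4 → ℝ | 0 < x 0 ∧ sp x ∈ S1} := by
  have hsp : Continuous sp := continuous_pi fun i => by fin_cases i <;> exact continuous_apply _
  exact (isOpen_lt continuous_const (continuous_apply 0)).inter (isOpen_S1.preimage hsp)

end Coordinates

section Signs

lemma mem_signs {s : ℝ} (h : s ∈ ({-1, 1} : Finset ℝ)) : s ∈ ({-1, 1} : Set ℝ) := by
  simpa using h

lemma inner_I_mul_add_inner_I_mul (z w : ℂ) : ⟪z, I * w⟫_ℝ + ⟪w, I * z⟫_ℝ = 0 := by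
  simp only [Complex.inner, Complex.mul_re, Complex.mul_im, Complex.I_re, Complex.I_im,
    Complex.conj_re, Complex.conj_im]
  ring

lemma sum_signs_inner_I_mul_neg (f : ℝ → ℂ) :
    ∑ s ∈ ({-1, 1} : Finset ℝ), ⟪f s, I * f (-s)⟫_ℝ = 0 := by
  rw [Finset.sum_pair (by norm_num), neg_neg, add_comm]
  exact inner_I_mul_add_inner_I_mul _ _

/-- The mass terms are skew-adjoint: they drop out of the balance of `Σ |z|²`. -/
lemma sum_inner_eq_zero_of_transport (ω : ℝ) (z d : ℝ → ℝ → ℝ → ℂ)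
    (h : ∀ a ∈ ({-1, 1} : Set ℝ), ∀ b ∈ ({-1, 1} : Set ℝ), ∀ c ∈ ({-1, 1} : Set ℝ),
      d a b c + I * ω * z a (-b) c + I * ω * z a b (-c) = 0) :
    ∑ a ∈ ({-1, 1} : Finset ℝ), ∑ b ∈ ({-1, 1} : Finset ℝ), ∑ c ∈ ({-1, 1} : Finset ℝ),
      ⟪z a b c, d a b c⟫_ℝ = 0 := by
  have hd : ∀ a ∈ ({-1, 1} : Finset ℝ), ∀ b ∈ ({-1, 1} : Finset ℝ), ∀ c ∈ ({-1, 1} : Finset ℝ),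
      ⟪z a b c, d a b c⟫_ℝ
        = -ω * (⟪z a b c, I * z a (-b) c⟫_ℝ + ⟪z a b c, I * z a b (-c)⟫_ℝ) := by
    intro a ha b hb c hc
    have hsmul : ∀ w : ℂ, I * ω * w = ω • (I * w) := fun w => by
      rw [Complex.real_smul]; ring
    rw [eq_sub_of_add_eq (eq_sub_of_add_eq (h a (mem_signs ha) b (mem_signs hb) c (mem_signs hc))),
      hsmul, hsmul]
    simp only [zero_sub, inner_sub_right, inner_neg_right, real_inner_smul_right]
    ring
  have hb : ∀ a, ∑ b ∈ ({-1, 1} : Finset ℝ), ∑ c ∈ ({-1, 1} : Finset ℝ),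
      ⟪z a b c, I * z a (-b) c⟫_ℝ = 0 := fun a => by
    rw [Finset.sum_comm]
    exact Finset.sum_eq_zero fun c _ => sum_signs_inner_I_mul_neg (z a · c)
  have hc : ∀ a b, ∑ c ∈ ({-1, 1} : Finset ℝ), ⟪z a b c, I * z a b (-c)⟫_ℝ = 0 :=
    fun a b => sum_signs_inner_I_mul_neg (z a b)
  simp_rw [Finset.sum_congr rfl fun a ha => Finset.sum_congr rfl fun b hb =>
    Finset.sum_congr rfl fun c hc => hd a ha b hb c hc, ← Finset.mul_sum, Finset.sum_add_distrib,
    hb, hc]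
  simp

lemma norm_exp_mul_I_mul_ofReal_mul_le (θ : ℝ) {m : ℝ} (hm : m ∈ Icc 0 1) (z : ℂ) :
    ‖exp (θ * I) * (m : ℂ) * z‖ ≤ ‖z‖ := by
  rw [norm_mul, norm_mul, norm_exp_ofReal_mul_I, one_mul, norm_real, Real.norm_of_nonneg hm.1]
  exact mul_le_of_le_one_left (norm_nonneg z) hm.2

lemma sum_norm_sq_mul_snd_sub_fst_nonpos (z : ℝ → ℝ → ℝ → ℂ)
    (h : ∀ c ∈ ({-1, 1} : Set ℝ), ‖z (-1) 1 c‖ ≤ ‖z 1 (-1) c‖) :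
    ∑ a ∈ ({-1, 1} : Finset ℝ), ∑ b ∈ ({-1, 1} : Finset ℝ), ∑ c ∈ ({-1, 1} : Finset ℝ),
      ‖z a b c‖ ^ 2 * (b - a) ≤ 0 := by
  have h₁ := pow_le_pow_left₀ (norm_nonneg _) (h 1 (by simp)) 2
  have h₂ := pow_le_pow_left₀ (norm_nonneg _) (h (-1) (by simp)) 2
  simp only [Finset.sum_pair (show (-1 : ℝ) ≠ 1 by norm_num)]
  linarith

lemma sum_norm_sq_mul_fst_sub_thd_nonpos (z : ℝ → ℝ → ℝ → ℂ)
    (h : ∀ b ∈ ({-1, 1} : Set ℝ), ‖z 1 b (-1)‖ ≤ ‖z (-1) b 1‖) :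
    ∑ a ∈ ({-1, 1} : Finset ℝ), ∑ b ∈ ({-1, 1} : Finset ℝ), ∑ c ∈ ({-1, 1} : Finset ℝ),
      ‖z a b c‖ ^ 2 * (a - c) ≤ 0 := by
  have h₁ := pow_le_pow_left₀ (norm_nonneg _) (h 1 (by simp)) 2
  have h₂ := pow_le_pow_left₀ (norm_nonneg _) (h (-1) (by simp)) 2
  simp only [Finset.sum_pair (show (-1 : ℝ) ≠ 1 by norm_num)]
  linarith

end Signs

section Analysis

lemma pdC_sub_eq_fderiv (f : (Fin 4 → ℝ) → ℂ) (x : Fin 4 → ℝ) (a b c : ℝ) :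
    pdC 0 f x - a * pdC 1 f x - b * pdC 2 f x - c * pdC 3 f x
      = fderiv ℝ f x ![1, -a, -b, -c] := by
  have hv : (![1, -a, -b, -c] : Fin 4 → ℝ) = Pi.single 0 1 - a • Pi.single 1 1
      - b • Pi.single 2 1 - c • Pi.single 3 1 := by
    ext i; fin_cases i <;> simp
  simp [hv, pdC, Complex.real_smul]

lemma trace_eq_sum_apply_single {n : ℕ} (A : (Fin n → ℝ) →ₗ[ℝ] (Fin n → ℝ)) :
    LinearMap.trace ℝ _ A = ∑ i, A (Pi.single i 1) i := by
  rw [LinearMap.trace_eq_matrix_trace ℝ (Pi.basisFun ℝ (Fin n)), Matrix.trace]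
  simp

lemma sum_integral_faces_eq_zero_of_trace_fderiv_eq_zero {n : ℕ} {a b : Fin (n + 1) → ℝ}
    (hle : a ≤ b) {f : (Fin (n + 1) → ℝ) → Fin (n + 1) → ℝ} (hc : ContinuousOn f (Icc a b))
    (hd : ∀ x ∈ univ.pi fun i => Ioo (a i) (b i), DifferentiableAt ℝ f x)
    (hdiv : ∀ x ∈ univ.pi fun i => Ioo (a i) (b i),
      LinearMap.trace ℝ _ (fderiv ℝ f x : (Fin (n + 1) → ℝ) →ₗ[ℝ] (Fin (n + 1) → ℝ)) = 0) :
    ∑ i, ((∫ y in Icc (a ∘ i.succAbove) (b ∘ i.succAbove), f (i.insertNth (b i) y) i)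
      - ∫ y in Icc (a ∘ i.succAbove) (b ∘ i.succAbove), f (i.insertNth (a i) y) i) = 0 := by
  have hae : (fun x => ∑ i, fderiv ℝ f x (Pi.single i 1) i) =ᵐ[volume.restrict (Icc a b)] 0 := by
    have hIoo : (univ.pi fun i => Ioo (a i) (b i)) =ᵐ[volume] Icc a b := by
      rw [volume_pi]; exact Measure.univ_pi_Ioo_ae_eq_Icc
    rw [← Measure.restrict_congr_set hIoo]
    refine ae_restrict_of_forall_mem (MeasurableSet.univ_pi fun _ => measurableSet_Ioo)
      fun x hx => ?_
    simpa [trace_eq_sum_apply_single] using hdiv x hx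
  have h := integral_divergence_of_hasFDerivAt_off_countable a b hle f (fderiv ℝ f) ∅
    countable_empty hc (fun x hx => (hd x hx.1).hasFDerivAt)
    (integrableOn_zero.congr_fun_ae hae.symm)
  rw [integral_congr_ae hae] at h
  simpa using h.symm

lemma _root_.Homeomorph.exists_pos_forall_le_norm_apply_notMem {E F : Type*}
    [SeminormedAddCommGroup E] [TopologicalSpace F] (e : E ≃ₜ F) {K : Set F} (hK : IsCompact K) :
    ∃ R > 0, ∀ y, R ≤ ‖y‖ → e y ∉ K := by
  obtain ⟨R, hR, hsub⟩ := (hK.image e.symm.continuous).isBounded.subset_ball_lt 0 0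
  refine ⟨R, hR, fun y hy hyK => ?_⟩
  have := hsub ⟨e y, hyK, e.symm_apply_apply y⟩
  rw [mem_ball_zero_iff] at this
  linarith

lemma ae_apply_ne {n : ℕ} (i : Fin n) (c : ℝ) : ∀ᵐ y : Fin n → ℝ, y i ≠ c := by
  rw [ae_iff]
  simpa [volume_pi] using Measure.pi_hyperplane (fun _ => (volume : Measure ℝ)) i c

lemma abs_le_norm_tail {n : ℕ} (x : Fin (n + 1) → ℝ) {i : Fin (n + 1)} (hi : i ≠ 0) :
    |x i| ≤ ‖Fin.tail x‖ := by
  simpa [Fin.tail] using norm_le_pi_norm (Fin.tail x) (i.pred hi)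

lemma setIntegral_insertNth_eq_zero {n : ℕ} [NeZero n] {E : Type*} [NormedAddCommGroup E]
    [NormedSpace ℝ E] {f : (Fin (n + 1) → ℝ) → E} {lo hi : Fin (n + 1) → ℝ} {i : Fin (n + 1)}
    (hi0 : i ≠ 0) {r : ℝ} (hf : ∀ x, x 0 ∈ Icc (lo 0) (hi 0) → x i = r → f x = 0) :
    ∫ y in Icc (lo ∘ i.succAbove) (hi ∘ i.succAbove), f (i.insertNth r y) = 0 := by
  refine setIntegral_eq_zero_of_forall_eq_zero fun y hy => hf _ ?_ (Fin.insertNth_apply_same _ _ _)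
  have h0 := Fin.succAbove_ne_zero_zero hi0
  have hy0 := Fin.insertNth_apply_succAbove (α := fun _ => ℝ) i r y 0
  rw [h0] at hy0
  rw [hy0]
  exact ⟨by simpa [h0] using hy.1 0, by simpa [h0] using hy.2 0⟩

lemma setIntegral_S1_eq_setIntegral_Icc (f : (Fin 3 → ℝ) → ℝ) {R : ℝ} (hf : ∀ y, R ≤ ‖y‖ → f (shear y) = 0) :
    ∫ p in S1, f p = ∫ y in Icc ![-R, 0, 0] ![R, R, R], f (shear y) := by
  have hpre : shear ⁻¹' S1 = {y | 0 < y 1 ∧ 0 < y 2} := by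
    ext y; exact shear_mem_S1_iff
  have hquad : MeasurableSet {y : Fin 3 → ℝ | 0 ≤ y 1 ∧ 0 ≤ y 2} :=
    (measurableSet_le measurable_const (measurable_pi_apply 1)).inter
      (measurableSet_le measurable_const (measurable_pi_apply 2))
  calc ∫ p in S1, f p = ∫ y in {y | 0 < y 1 ∧ 0 < y 2}, f (shear y) := by
        rw [← hpre, measurePreserving_shear.setIntegral_preimage_emb
          shear.toHomeomorph.measurableEmbedding]
    _ = ∫ y in {y | 0 ≤ y 1 ∧ 0 ≤ y 2}, f (shear y) := by
        refine (setIntegral_eq_of_subset_of_ae_sdiff_eq_zero hquad.nullMeasurableSet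
          (fun y hy => ⟨hy.1.le, hy.2.le⟩) ?_).symm
        filter_upwards [ae_apply_ne 1 0, ae_apply_ne 2 0] with y h1 h2 hy
        exact absurd ⟨hy.1.1.lt_of_ne' h1, hy.1.2.lt_of_ne' h2⟩ hy.2
    _ = ∫ y in Icc ![-R, 0, 0] ![R, R, R], f (shear y) := by
        refine setIntegral_eq_of_subset_of_forall_sdiff_eq_zero hquad
          (fun y hy => ⟨by simpa using hy.1 1, by simpa using hy.1 2⟩) fun y hy => hf y ?_
        by_contra! hlt
        have hb : ∀ i, -R ≤ y i ∧ y i ≤ R := fun i =>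
          abs_le.1 ((norm_le_pi_norm y i).trans hlt.le)
        refine hy.2 ⟨fun i => ?_, fun i => ?_⟩ <;> fin_cases i <;> simp <;>
          linarith [hb 0, hb 1, hb 2, hy.1.1, hy.1.2]

end Analysis

section Flux

/-- The transport direction `(1, -a, -b, -c)` of `ψ_{abc}`, pulled back by `spacetimeShear`. -/
def weight (a b c : ℝ) : Fin 4 → ℝ := ![1, -a, b - a, a - c]

lemma spacetimeShear_weight (a b c : ℝ) :
    spacetimeShear (weight a b c) = ![1, -a, -b, -c] := by
  ext i; fin_cases i <;> simp [spacetimeShear_apply, shear_apply, weight, pt] <;> ring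

def flux (ψ : ℝ → ℝ → ℝ → (Fin 4 → ℝ) → ℂ) (x : Fin 4 → ℝ) : Fin 4 → ℝ :=
  ∑ a ∈ ({-1, 1} : Finset ℝ), ∑ b ∈ ({-1, 1} : Finset ℝ), ∑ c ∈ ({-1, 1} : Finset ℝ),
    ‖ψ a b c (spacetimeShear x)‖ ^ 2 • weight a b c

variable {ψ : ℝ → ℝ → ℝ → (Fin 4 → ℝ) → ℂ} {μ : ℝ → ℝ}

lemma flux_apply (x : Fin 4 → ℝ) (j : Fin 4) :
    flux ψ x j = ∑ a ∈ ({-1, 1} : Finset ℝ), ∑ b ∈ ({-1, 1} : Finset ℝ),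
      ∑ c ∈ ({-1, 1} : Finset ℝ), ‖ψ a b c (spacetimeShear x)‖ ^ 2 * weight a b c j := by
  simp [flux, Finset.sum_apply]

lemma flux_eq_zero {x : Fin 4 → ℝ}
    (h : ∀ a ∈ ({-1, 1} : Set ℝ), ∀ b ∈ ({-1, 1} : Set ℝ), ∀ c ∈ ({-1, 1} : Set ℝ),
      ψ a b c (spacetimeShear x) = 0) :
    flux ψ x = 0 :=
  Finset.sum_eq_zero fun a ha => Finset.sum_eq_zero fun b hb => Finset.sum_eq_zero fun c hc => by
    simp [h a (mem_signs ha) b (mem_signs hb) c (mem_signs hc)]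

lemma flux_cons_zero (t : ℝ) (y : Fin 3 → ℝ) : flux ψ (Fin.cons t y) 0 = totD ψ t (shear y) := by
  simp [flux_apply, totD, weight, spacetimeShear_apply]

lemma setIntegral_flux_cons_zero {t R : ℝ} (h : ∀ y, R ≤ ‖y‖ → flux ψ (Fin.cons t y) = 0) :
    ∫ y in Icc ![-R, 0, 0] ![R, R, R], flux ψ (Fin.cons t y) 0 = ∫ p in S1, totD ψ t p := by
  simp_rw [flux_cons_zero]
  exact (setIntegral_S1_eq_setIntegral_Icc _ fun y hy => by rw [← flux_cons_zero, h y hy, Pi.zero_apply]).symm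

lemma continuousOn_flux {s : Set (Fin 4 → ℝ)}
    (h : ∀ a ∈ ({-1, 1} : Set ℝ), ∀ b ∈ ({-1, 1} : Set ℝ), ∀ c ∈ ({-1, 1} : Set ℝ),
      ContinuousOn (ψ a b c) s) :
    ContinuousOn (flux ψ) (spacetimeShear ⁻¹' s) :=
  continuousOn_finsetSum _ fun a ha => continuousOn_finsetSum _ fun b hb =>
    continuousOn_finsetSum _ fun c hc =>
      ((((h a (mem_signs ha) b (mem_signs hb) c (mem_signs hc)).comp
        spacetimeShear.continuous.continuousOn (mapsTo_preimage _ _)).norm).pow 2).smul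
          continuousOn_const

lemma hasFDerivAt_flux {x : Fin 4 → ℝ}
    (hd : ∀ a ∈ ({-1, 1} : Set ℝ), ∀ b ∈ ({-1, 1} : Set ℝ), ∀ c ∈ ({-1, 1} : Set ℝ),
      DifferentiableAt ℝ (ψ a b c) (spacetimeShear x)) :
    HasFDerivAt (flux ψ)
      (∑ a ∈ ({-1, 1} : Finset ℝ), ∑ b ∈ ({-1, 1} : Finset ℝ), ∑ c ∈ ({-1, 1} : Finset ℝ),
        (2 • (innerSL ℝ (ψ a b c (spacetimeShear x))).comp
          ((fderiv ℝ (ψ a b c) (spacetimeShear x)).comp spacetimeShear)).smulRight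
          (weight a b c)) x :=
  HasFDerivAt.fun_sum fun a ha => HasFDerivAt.fun_sum fun b hb => HasFDerivAt.fun_sum fun c hc =>
    (((hd a (mem_signs ha) b (mem_signs hb) c (mem_signs hc)).hasFDerivAt.comp x
      spacetimeShear.hasFDerivAt).norm_sq).smul_const _

lemma trace_fderiv_flux (ω : ℝ) {x : Fin 4 → ℝ}
    (hd : ∀ a ∈ ({-1, 1} : Set ℝ), ∀ b ∈ ({-1, 1} : Set ℝ), ∀ c ∈ ({-1, 1} : Set ℝ),
      DifferentiableAt ℝ (ψ a b c) (spacetimeShear x))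
    (heq : ∀ a ∈ ({-1, 1} : Set ℝ), ∀ b ∈ ({-1, 1} : Set ℝ), ∀ c ∈ ({-1, 1} : Set ℝ),
      fderiv ℝ (ψ a b c) (spacetimeShear x) ![1, -a, -b, -c]
        + I * ω * ψ a (-b) c (spacetimeShear x) + I * ω * ψ a b (-c) (spacetimeShear x) = 0) :
    LinearMap.trace ℝ _ (fderiv ℝ (flux ψ) x : (Fin 4 → ℝ) →ₗ[ℝ] (Fin 4 → ℝ)) = 0 := by
  rw [(hasFDerivAt_flux hd).fderiv]
  simp only [ContinuousLinearMap.toLinearMap_sum, map_sum, ContinuousLinearMap.coe_smulRight,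
    LinearMap.trace_smulRight, ContinuousLinearMap.coe_coe, smul_apply,
    ContinuousLinearMap.comp_apply, spacetimeShear_weight, innerSL_apply_apply, ← Finset.smul_sum]
  rw [sum_inner_eq_zero_of_transport ω _ _ heq, smul_zero]

lemma sum_integral_faces_flux_eq_zero (ω : ℝ)
    (hreg : ∀ a ∈ ({-1, 1} : Set ℝ), ∀ b ∈ ({-1, 1} : Set ℝ), ∀ c ∈ ({-1, 1} : Set ℝ),
      ContDiffOn ℝ 1 (ψ a b c) {x : Fin 4 → ℝ | 0 ≤ x 0 ∧ sp x ∈ closure S1})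
    (heq : ∀ a ∈ ({-1, 1} : Set ℝ), ∀ b ∈ ({-1, 1} : Set ℝ), ∀ c ∈ ({-1, 1} : Set ℝ),
      ∀ x : Fin 4 → ℝ, 0 < x 0 → sp x ∈ S1 →
        pdC 0 (ψ a b c) x - (a : ℂ) * pdC 1 (ψ a b c) x
          - (b : ℂ) * pdC 2 (ψ a b c) x - (c : ℂ) * pdC 3 (ψ a b c) x
          + I * (ω : ℂ) * ψ a (-b) c x + I * (ω : ℂ) * ψ a b (-c) x = 0)
    {lo hi : Fin 4 → ℝ} (hle : lo ≤ hi) (h0 : 0 ≤ lo 0) (h2 : 0 ≤ lo 2) (h3 : 0 ≤ lo 3) :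
    ∑ i, ((∫ y in Icc (lo ∘ i.succAbove) (hi ∘ i.succAbove), flux ψ (i.insertNth (hi i) y) i)
      - ∫ y in Icc (lo ∘ i.succAbove) (hi ∘ i.succAbove), flux ψ (i.insertNth (lo i) y) i) = 0 := by
  have hS1 : ∀ x ∈ univ.pi fun i => Ioo (lo i) (hi i),
      0 < spacetimeShear x 0 ∧ sp (spacetimeShear x) ∈ S1 := fun x hx => by
    refine ⟨h0.trans_lt (hx 0 trivial).1, ?_⟩
    rw [sp_spacetimeShear, shear_mem_S1_iff]
    exact ⟨h2.trans_lt (hx 2 trivial).1, h3.trans_lt (hx 3 trivial).1⟩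
  have hdiff : ∀ x ∈ univ.pi fun i => Ioo (lo i) (hi i),
      ∀ a ∈ ({-1, 1} : Set ℝ), ∀ b ∈ ({-1, 1} : Set ℝ), ∀ c ∈ ({-1, 1} : Set ℝ),
        DifferentiableAt ℝ (ψ a b c) (spacetimeShear x) := fun x hx a ha b hb c hc =>
    (((hreg a ha b hb c hc).differentiableOn one_ne_zero).mono
      fun y hy => ⟨hy.1.le, subset_closure hy.2⟩).differentiableAt
      (isOpen_setOf_pos_sp_mem_S1.mem_nhds (hS1 x hx))
  refine sum_integral_faces_eq_zero_of_trace_fderiv_eq_zero hle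
    ((continuousOn_flux fun a ha b hb c hc => (hreg a ha b hb c hc).continuousOn).mono
      fun x hx => ⟨h0.trans (hx.1 0), ?_⟩)
    (fun x hx => (hasFDerivAt_flux (hdiff x hx)).differentiableAt)
    fun x hx => trace_fderiv_flux ω (hdiff x hx) fun a ha b hb c hc => ?_
  · rw [sp_spacetimeShear]
    exact shear_mem_closure_S1 (h2.trans (hx.1 2)) (h3.trans (hx.1 3))
  · rw [← pdC_sub_eq_fderiv]
    exact heq a ha b hb c hc _ (hS1 x hx).1 (hS1 x hx).2

lemma setIntegral_flux_C1_nonpos (θ₁ : ℝ) (hμ01 : ∀ r, 0 ≤ r → μ r ∈ Icc (0 : ℝ) 1)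
    (hbc1 : ∀ ς₂ ∈ ({-1, 1} : Set ℝ), ∀ t : ℝ, 0 ≤ t → ∀ r b : ℝ, r < b →
      ψ (-1) 1 ς₂ ![t, r, r, b]
        = exp (θ₁ * I) * ((μ |r - b| : ℝ) : ℂ) * ψ 1 (-1) ς₂ ![t, r, r, b])
    {lo hi : Fin 4 → ℝ} (h0 : 0 ≤ lo 0) (h3 : 0 ≤ lo 3) :
    ∫ y in Icc (lo ∘ Fin.succAbove 2) (hi ∘ Fin.succAbove 2), flux ψ (Fin.insertNth 2 0 y) 2
      ≤ 0 := by
  refine setIntegral_nonpos_ae measurableSet_Icc ?_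
  filter_upwards [ae_apply_ne 2 0] with y hy2 hy
  have hS : spacetimeShear (Fin.insertNth 2 0 y) = ![y 0, y 1, y 1, y 1 + y 2] := by
    rw [show Fin.insertNth 2 (0 : ℝ) y = ![y 0, y 1, 0, y 2] by ext j; fin_cases j <;> rfl]
    ext j; fin_cases j <;> simp [spacetimeShear_apply, shear_apply, pt]
  rw [flux_apply, hS]
  refine sum_norm_sq_mul_snd_sub_fst_nonpos _ fun c hc => ?_
  rw [hbc1 c hc _ (h0.trans (hy.1 0)) _ _ (by linarith [(h3.trans (hy.1 2)).lt_of_ne' hy2])]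
  exact norm_exp_mul_I_mul_ofReal_mul_le _ (hμ01 _ (abs_nonneg _)) _

lemma setIntegral_flux_C2_nonpos (θ₂ : ℝ) (hμ01 : ∀ r, 0 ≤ r → μ r ∈ Icc (0 : ℝ) 1)
    (hbc2 : ∀ ς₁ ∈ ({-1, 1} : Set ℝ), ∀ t : ℝ, 0 ≤ t → ∀ a r : ℝ, a < r →
      ψ 1 ς₁ (-1) ![t, r, a, r]
        = exp (θ₂ * I) * ((μ |a - r| : ℝ) : ℂ) * ψ (-1) ς₁ 1 ![t, r, a, r])
    {lo hi : Fin 4 → ℝ} (h0 : 0 ≤ lo 0) (h2 : 0 ≤ lo 2) :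
    ∫ y in Icc (lo ∘ Fin.succAbove 3) (hi ∘ Fin.succAbove 3), flux ψ (Fin.insertNth 3 0 y) 3
      ≤ 0 := by
  refine setIntegral_nonpos_ae measurableSet_Icc ?_
  filter_upwards [ae_apply_ne 2 0] with y hy2 hy
  have hS : spacetimeShear (Fin.insertNth 3 0 y) = ![y 0, y 1, y 1 - y 2, y 1] := by
    rw [show Fin.insertNth 3 (0 : ℝ) y = ![y 0, y 1, y 2, 0] by ext j; fin_cases j <;> rfl]
    ext j; fin_cases j <;> simp [spacetimeShear_apply, shear_apply, pt]
  rw [flux_apply, hS]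
  refine sum_norm_sq_mul_fst_sub_thd_nonpos _ fun b hb => ?_
  rw [hbc2 b hb _ (h0.trans (hy.1 0)) _ _ (by linarith [(h2.trans (hy.1 2)).lt_of_ne' hy2])]
  exact norm_exp_mul_I_mul_ofReal_mul_le _ (hμ01 _ (abs_nonneg _)) _

end Flux

end LeakyProbability

open LeakyProbability Set

theorem leaky_probability_nonincreasing
    (ω : ℝ)
    (θ₁ θ₂ : ℝ)
    (μ : ℝ → ℝ) (hμ01 : ∀ r, 0 ≤ r → μ r ∈ Set.Icc (0 : ℝ) 1)
    (ψ : ℝ → ℝ → ℝ → (Fin 4 → ℝ) → ℂ)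
    -- `Ψ` is C¹ on `[0,∞) × closure S₁`
    (hreg : ∀ ς₀ ∈ ({-1, 1} : Set ℝ), ∀ ς₁ ∈ ({-1, 1} : Set ℝ), ∀ ς₂ ∈ ({-1, 1} : Set ℝ),
      ContDiffOn ℝ 1 (ψ ς₀ ς₁ ς₂) {x : Fin 4 → ℝ | 0 ≤ x 0 ∧ sp x ∈ closure S1})
    -- equal-time evolution equations on `(0,∞) × S₁`
    (heq : ∀ ς₀ ∈ ({-1, 1} : Set ℝ), ∀ ς₁ ∈ ({-1, 1} : Set ℝ), ∀ ς₂ ∈ ({-1, 1} : Set ℝ),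
      ∀ x : Fin 4 → ℝ, 0 < x 0 → sp x ∈ S1 →
        pdC 0 (ψ ς₀ ς₁ ς₂) x - (ς₀ : ℂ) * pdC 1 (ψ ς₀ ς₁ ς₂) x
          - (ς₁ : ℂ) * pdC 2 (ψ ς₀ ς₁ ς₂) x - (ς₂ : ℂ) * pdC 3 (ψ ς₀ ς₁ ς₂) x
          + Complex.I * (ω : ℂ) * ψ ς₀ (-ς₁) ς₂ x
          + Complex.I * (ω : ℂ) * ψ ς₀ ς₁ (-ς₂) x = 0)
    -- leaky boundary condition on `C₁ = {s_e1 = s_ph < s_e2}`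
    (hbc1 : ∀ ς₂ ∈ ({-1, 1} : Set ℝ), ∀ t : ℝ, 0 ≤ t → ∀ r b : ℝ, r < b →
      ψ (-1) 1 ς₂ ![t, r, r, b]
        = Complex.exp (θ₁ * Complex.I) * ((μ |r - b| : ℝ) : ℂ) * ψ 1 (-1) ς₂ ![t, r, r, b])
    -- leaky boundary condition on `C₂ = {s_e1 < s_ph = s_e2}`
    (hbc2 : ∀ ς₁ ∈ ({-1, 1} : Set ℝ), ∀ t : ℝ, 0 ≤ t → ∀ a r : ℝ, a < r →
      ψ 1 ς₁ (-1) ![t, r, a, r]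
        = Complex.exp (θ₂ * Complex.I) * ((μ |a - r| : ℝ) : ℂ) * ψ (-1) ς₁ 1 ![t, r, a, r])
    -- compact spatial support on every bounded time interval
    (hsupp : ∀ T : ℝ, ∃ K : Set (Fin 3 → ℝ), IsCompact K ∧
      ∀ ς₀ ∈ ({-1, 1} : Set ℝ), ∀ ς₁ ∈ ({-1, 1} : Set ℝ), ∀ ς₂ ∈ ({-1, 1} : Set ℝ),
        ∀ t ∈ Set.Icc 0 T, ∀ p : Fin 3 → ℝ, p ∉ K → ψ ς₀ ς₁ ς₂ (pt t p) = 0) :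
    ∀ t₁ t₂ : ℝ, 0 ≤ t₁ → t₁ ≤ t₂ →
      (∫ p in S1, totD ψ t₂ p) ≤ ∫ p in S1, totD ψ t₁ p := by
  intro t₁ t₂ ht₁ h12
  obtain ⟨K, hK, hψK⟩ := hsupp t₂
  obtain ⟨R, hR, hRK⟩ := shear.toHomeomorph.exists_pos_forall_le_norm_apply_notMem hK
  have hvan : ∀ x : Fin 4 → ℝ, x 0 ∈ Icc 0 t₂ → R ≤ ‖Fin.tail x‖ → flux ψ x = 0 :=
    fun x hx hRx => flux_eq_zero fun a ha b hb c hc => hψK a ha b hb c hc _ hx _ (hRK _ hRx)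
  have hfar : ∀ i : Fin 4, i ≠ 0 → ∀ r, |r| = R →
      ∫ y in Icc (![t₁, -R, 0, 0] ∘ i.succAbove) (![t₂, R, R, R] ∘ i.succAbove),
        flux ψ (i.insertNth r y) i = 0 := fun i hi r hr =>
    setIntegral_insertNth_eq_zero (f := fun x => flux ψ x i) hi fun x hx hxi => by
      rw [hvan x ⟨ht₁.trans hx.1, hx.2⟩ (hr ▸ hxi ▸ abs_le_norm_tail x hi), Pi.zero_apply]
  have htime : ∀ t ∈ Icc 0 t₂,
      ∫ y in Icc (![t₁, -R, 0, 0] ∘ Fin.succAbove 0) (![t₂, R, R, R] ∘ Fin.succAbove 0),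
        flux ψ (Fin.cons t y) 0 = ∫ p in S1, totD ψ t p := fun t ht =>
    setIntegral_flux_cons_zero fun y hy => hvan _ ht (by simpa using hy)
  have hbal := sum_integral_faces_flux_eq_zero ω hreg heq (lo := ![t₁, -R, 0, 0])
    (hi := ![t₂, R, R, R]) (fun i => by fin_cases i <;> simp <;> linarith) ht₁ le_rfl le_rfl
  simp only [Fin.sum_univ_four, Fin.insertNth_zero', Matrix.cons_val_zero, Matrix.cons_val_one,
    Matrix.cons_val_two, Matrix.cons_val_three, Matrix.head_cons, Matrix.tail_cons] at hbal
  rw [htime t₂ ⟨ht₁.trans h12, le_rfl⟩, htime t₁ ⟨ht₁, h12⟩, hfar 1 (by decide) R (abs_of_pos hR),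
    hfar 1 (by decide) (-R) (by simp [hR.le]), hfar 2 (by decide) R (abs_of_pos hR),
    hfar 3 (by decide) R (abs_of_pos hR)] at hbal
  linarith [setIntegral_flux_C1_nonpos (ψ := ψ) (lo := ![t₁, -R, 0, 0]) (hi := ![t₂, R, R, R])
    θ₁ hμ01 hbc1 ht₁ le_rfl, setIntegral_flux_C2_nonpos (ψ := ψ) (lo := ![t₁, -R, 0, 0])
    (hi := ![t₂, R, R, R]) θ₂ hμ01 hbc2 ht₁ le_rfl]
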